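/- The lifting map m defined from the ordering of P by edge-squared distance to the source s is 1-Lipschitz as a map between Euclidean metrics: for all a, b ∈ P, ‖m(a) − m(b)‖ ≤ ‖a − b‖. -/

import Mathlib

open scoped BigOperators
open MeasureTheory

noncomputable section

/-- Points of `ℝ^d`. -/
abbrev Pt (d : ℕ) : Type := EuclideanSpace ℝ (Fin d)

/-- The edge-squared metric on a point set `P ⊆ ℝ^d`: the infimum over finite chains of points
of `P` from `a` to `b` of the sum of squared Euclidean lengths of the steps. -/
noncomputable def edgeSq {d : ℕ} (P : Set (Pt d)) (a b : Pt d) : ℝ :=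
  sInf {c : ℝ | ∃ (k : ℕ) (p : Fin (k + 1) → Pt d), p 0 = a ∧ p (Fin.last k) = b ∧
    (∀ i, p i ∈ P) ∧ c = ∑ i : Fin k, ‖p i.succ - p i.castSucc‖ ^ 2}

/-!
The increments `m(pᵢ) - m(pᵢ₋₁)` are pairwise orthogonal with squared lengths
`d₂(s,pᵢ) - d₂(s,pᵢ₋₁)`, so for `i ≤ j` the squared distance `‖m(pⱼ) - m(pᵢ)‖²` telescopes to
`d₂(s,pⱼ) - d₂(s,pᵢ)`. Extending a chain from `s` to `pᵢ` by the single step `pᵢ → pⱼ` shows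
`d₂(s,pⱼ) ≤ d₂(s,pᵢ) + ‖pⱼ - pᵢ‖²`.
-/

open scoped RealInnerProductSpace

section OrthogonalIncrements

variable {E : Type*} [NormedAddCommGroup E] [InnerProductSpace ℝ E] {n : ℕ}
  {m v : Fin (n + 1) → E} {c : Fin n → ℝ}

theorem inner_sub_eq_zero_of_lt (hv : Orthonormal ℝ v)
    (hrec : ∀ i : Fin n, m i.succ = m i.castSucc + c i • v i.succ) {i k l : Fin (n + 1)}
    (hik : i ≤ k) (hkl : k < l) : ⟪m k - m i, v l⟫ = 0 := by
  induction k using Fin.induction with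
  | zero => simp [Fin.le_zero_iff.mp hik]
  | succ k ih =>
    rcases hik.eq_or_lt with rfl | hlt
    · simp
    have hvl : ⟪v k.succ, v l⟫ = 0 := hv.2 hkl.ne
    rw [hrec k, add_sub_right_comm, inner_add_left, real_inner_smul_left, hvl, mul_zero,
      add_zero]
    exact ih (Fin.le_castSucc_iff.mpr hlt) (Fin.castSucc_lt_succ.trans hkl)

theorem norm_sub_sq_succ (hv : Orthonormal ℝ v)
    (hrec : ∀ i : Fin n, m i.succ = m i.castSucc + c i • v i.succ) {i : Fin (n + 1)} {k : Fin n}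
    (hik : i ≤ k.castSucc) : ‖m k.succ - m i‖ ^ 2 = ‖m k.castSucc - m i‖ ^ 2 + c k ^ 2 := by
  have horth : ⟪m k.castSucc - m i, c k • v k.succ⟫ = 0 := by
    rw [real_inner_smul_right, inner_sub_eq_zero_of_lt hv hrec hik Fin.castSucc_lt_succ, mul_zero]
  rw [hrec k, add_sub_right_comm, norm_add_sq_real, horth, norm_smul, hv.1, Real.norm_eq_abs]
  simp

theorem norm_sub_sq_eq_sub_of_monotone (hv : Orthonormal ℝ v) {f : Fin (n + 1) → ℝ}
    (hf : Monotone f)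
    (hrec : ∀ i : Fin n, m i.succ = m i.castSucc + √(f i.succ - f i.castSucc) • v i.succ)
    {i j : Fin (n + 1)} (hij : i ≤ j) : ‖m j - m i‖ ^ 2 = f j - f i := by
  induction j using Fin.induction with
  | zero => simp [Fin.le_zero_iff.mp hij]
  | succ k ih =>
    rcases hij.eq_or_lt with rfl | hlt
    · simp
    have hik : i ≤ k.castSucc := Fin.le_castSucc_iff.mpr hlt
    have hstep : 0 ≤ f k.succ - f k.castSucc := sub_nonneg.mpr (hf Fin.castSucc_lt_succ.le)
    rw [norm_sub_sq_succ hv hrec hik, ih hik, Real.sq_sqrt hstep]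
    ring

end OrthogonalIncrements

section EdgeSquared

variable {d : ℕ} {P : Set (Pt d)}

def chainCosts (P : Set (Pt d)) (a b : Pt d) : Set ℝ :=
  {c : ℝ | ∃ (k : ℕ) (p : Fin (k + 1) → Pt d), p 0 = a ∧ p (Fin.last k) = b ∧
    (∀ i, p i ∈ P) ∧ c = ∑ i : Fin k, ‖p i.succ - p i.castSucc‖ ^ 2}

theorem edgeSq_eq_sInf_chainCosts (a b : Pt d) : edgeSq P a b = sInf (chainCosts P a b) := rfl

theorem chainCosts_bddBelow (a b : Pt d) : BddBelow (chainCosts P a b) := by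
  refine ⟨0, ?_⟩
  rintro _ ⟨k, q, -, -, -, rfl⟩
  positivity

theorem chainCosts_nonempty {a b : Pt d} (ha : a ∈ P) (hb : b ∈ P) :
    (chainCosts P a b).Nonempty := by
  refine ⟨‖b - a‖ ^ 2, 1, ![a, b], rfl, rfl, ?_, by simp⟩
  intro i
  fin_cases i <;> simpa

theorem add_sq_mem_chainCosts {a b x : Pt d} {s : ℝ} (hs : s ∈ chainCosts P a b) (hx : x ∈ P) :
    s + ‖x - b‖ ^ 2 ∈ chainCosts P a x := by
  obtain ⟨k, q, hq0, hqlast, hqP, rfl⟩ := hs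
  refine ⟨k + 1, Fin.snoc q x, ?_, by simp, ?_, ?_⟩
  · rw [← Fin.castSucc_zero, Fin.snoc_castSucc, hq0]
  · intro i
    induction i using Fin.lastCases with
    | last => simpa using hx
    | cast j => simpa using hqP j
  · simp only [Fin.sum_univ_castSucc, Fin.succ_castSucc, Fin.snoc_castSucc, Fin.succ_last,
      Fin.snoc_last, hqlast]

theorem edgeSq_le_edgeSq_add_sq {a b x : Pt d} (ha : a ∈ P) (hb : b ∈ P) (hx : x ∈ P) :
    edgeSq P a x ≤ edgeSq P a b + ‖x - b‖ ^ 2 := by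
  rw [edgeSq_eq_sInf_chainCosts, edgeSq_eq_sInf_chainCosts, ← sub_le_iff_le_add]
  refine le_csInf (chainCosts_nonempty ha hb) fun s hs => ?_
  rw [sub_le_iff_le_add]
  exact csInf_le (chainCosts_bddBelow a x) (add_sq_mem_chainCosts hs hx)

end EdgeSquared

theorem liftMap_lipschitz (d n : ℕ) (P : Set (Pt d)) (p : Fin (n + 1) → Pt d)
    (hP : P = Set.range p)
    (hmono : ∀ i j : Fin (n + 1), i ≤ j → edgeSq P (p 0) (p i) ≤ edgeSq P (p 0) (p j))
    (m : Fin (n + 1) → EuclideanSpace ℝ (Fin (n + 1)))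
    (hrec : ∀ i : Fin n, m i.succ = m i.castSucc +
      Real.sqrt (edgeSq P (p 0) (p i.succ) - edgeSq P (p 0) (p i.castSucc)) •
        EuclideanSpace.single i.succ (1 : ℝ)) :
    ∀ i j : Fin (n + 1), ‖m i - m j‖ ≤ ‖p i - p j‖ := by
  intro i j
  wlog hji : j ≤ i generalizing i j
  · rw [norm_sub_rev, norm_sub_rev (p i)]
    exact this j i (le_of_not_ge hji)
  have hmem (k : Fin (n + 1)) : p k ∈ P := hP ▸ Set.mem_range_self k
  have hlift : ‖m i - m j‖ ^ 2 = edgeSq P (p 0) (p i) - edgeSq P (p 0) (p j) :=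
    norm_sub_sq_eq_sub_of_monotone EuclideanSpace.orthonormal_single hmono hrec hji
  have hedge := edgeSq_le_edgeSq_add_sq (hmem 0) (hmem j) (hmem i)
  refine (pow_le_pow_iff_left₀ (norm_nonneg _) (norm_nonneg _) two_ne_zero).mp ?_
  linarith
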